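/- arXiv:1904.02305 — 4 statements merged into one kernel-verified Lean document; each statement's English description precedes it below -/
import Mathlib

section
/- Let C_n be a vertex-weighted oriented n-cycle with vertices x_1,...,x_n, edges oriented cyclically, and weight function w with w_i = w(x_i) ≥ 2 for all i. Let L_i = x_{i−1} x_i^{w_i} (indices mod n) be the minimal generators of the edge ideal I(C_n). Then every monomial M in the minimal generating set of I(C_n)^t has a unique expression M = L_{i_1}^{a_{i_1}} ··· L_{i_ℓ}^{a_{i_ℓ}} with 1 ≤ i_1 < ··· < i_ℓ ≤ n, all a_{i_p} > 0, and a_{i_1} + ··· + a_{i_ℓ} = t. -/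
open MvPolynomial

noncomputable section

namespace PaperReg

variable (k : Type) [Field k] (σ : Type)

/-- A graded free resolution of a homogeneous ideal `I` of `MvPolynomial σ k`:
finite-rank free modules `Fin (rk i) →₀ S` with basis elements of degrees `deg i`,
degree-preserving differentials, exact, augmented onto `I`. -/
structure GradedFreeRes (I : Ideal (MvPolynomial σ k)) where
  rk : ℕ → ℕ
  deg : (i : ℕ) → Fin (rk i) → ℕ
  aug : (Fin (rk 0) →₀ MvPolynomial σ k) →ₗ[MvPolynomial σ k] MvPolynomial σ k
  d : (i : ℕ) →
    ((Fin (rk (i + 1)) →₀ MvPolynomial σ k) →ₗ[MvPolynomial σ k] (Fin (rk i) →₀ MvPolynomial σ k))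
  aug_range : LinearMap.range aug = I
  exact_zero : LinearMap.range (d 0) = LinearMap.ker aug
  exact_succ : ∀ i, LinearMap.range (d (i + 1)) = LinearMap.ker (d i)
  aug_graded : ∀ b, (aug (Finsupp.single b 1)).IsHomogeneous (deg 0 b)
  d_graded : ∀ i b c, (d i (Finsupp.single b 1)) c = 0 ∨
    ∃ m, deg (i + 1) b = deg i c + m ∧ ((d i (Finsupp.single b 1)) c).IsHomogeneous m

/-- The `(i,j)`-th graded Betti number of `I`: the minimal number of degree-`j` basis
elements in homological position `i`, over all graded free resolutions of `I`
(achieved by the minimal graded free resolution). -/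
def betti (I : Ideal (MvPolynomial σ k)) (i j : ℕ) : ℕ :=
  sInf { r | ∃ F : GradedFreeRes k σ I,
    r = (Finset.univ.filter (fun b => F.deg i b = j)).card }

/-- Castelnuovo–Mumford regularity: `reg I = max { j - i | betti I i j ≠ 0 }`. -/
def reg (I : Ideal (MvPolynomial σ k)) : ℕ :=
  sSup { r | ∃ i j : ℕ, betti k σ I i j ≠ 0 ∧ r = j - i }

/-- The monic monomial with exponent vector `a`. -/
def mon (a : σ →₀ ℕ) : MvPolynomial σ k := monomial a 1

/-- `I` is a monomial ideal. -/
def IsMonomialIdeal (I : Ideal (MvPolynomial σ k)) : Prop :=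
  ∃ A : Set (σ →₀ ℕ), I = Ideal.span (mon k σ '' A)

/-- The exponent vectors of the unique minimal set of monomial generators of a
monomial ideal: monomials of `I` minimal with respect to divisibility. -/
def minGens (I : Ideal (MvPolynomial σ k)) : Set (σ →₀ ℕ) :=
  { a | mon k σ a ∈ I ∧ ∀ b : σ →₀ ℕ, mon k σ b ∈ I → b ≤ a → b = a }

/-- The support of a monomial ideal: variables appearing in its minimal generators. -/
def isupp (I : Ideal (MvPolynomial σ k)) : Set σ :=
  ⋃ a ∈ minGens k σ I, ↑a.support

variable (n : ℕ) [NeZero n]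

/-- The exponent vector of the `i`-th generator `L_i = x_{i-1} x_i ^ (w i)` of the
edge ideal of the vertex-weighted oriented `n`-cycle (indices mod `n`). -/
def cycE (w : Fin n → ℕ) (i : Fin n) : Fin n →₀ ℕ :=
  Finsupp.single (i - 1) 1 + Finsupp.single i (w i)

/-- The generator `L_i = x_{i-1} x_i ^ (w i)`. -/
def cycL (w : Fin n → ℕ) (i : Fin n) : MvPolynomial (Fin n) k :=
  monomial (cycE n w i) (1 : k)

/-- The edge ideal of the vertex-weighted oriented `n`-cycle with weights `w`. -/
def cycIdeal (w : Fin n → ℕ) : Ideal (MvPolynomial (Fin n) k) :=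
  Ideal.span (Set.range (cycL k n w))

/-! `I(C_n)^t` is spanned by the products of `t` generators `L_i`, so each of its minimal
monomial generators is such a product. Uniqueness: comparing exponents of `x_j` in two
factorizations `c`, `c'` gives `|c_{j+1} - c'_{j+1}| = w_j |c_j - c'_j| ≥ 2 |c_j - c'_j|`;
at an index where `|c_j - c'_j|` is largest this forces it to vanish. -/

open scoped Pointwise

section MonomialPowers

variable {k σ} {ι : Type*} [Fintype ι]

/-- The exponent vectors of the products of `t` of the monomials `x ^ e i`. -/
def sumsOfCard (e : ι → σ →₀ ℕ) (t : ℕ) : Set (σ →₀ ℕ) :=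
  {b | ∃ c : ι → ℕ, ∑ i, c i = t ∧ b = ∑ i, c i • e i}

lemma sumsOfCard_zero (e : ι → σ →₀ ℕ) : sumsOfCard e 0 = {0} := by
  ext b
  simp only [sumsOfCard, Finset.sum_eq_zero_iff, Finset.mem_univ, true_implies,
    Set.mem_ofPred_eq, Set.mem_singleton_iff]
  constructor
  · rintro ⟨c, hc, rfl⟩
    simp [hc]
  · rintro rfl
    exact ⟨0, fun _ => rfl, by simp⟩

variable [DecidableEq ι]

lemma sum_add_single_smul (e : ι → σ →₀ ℕ) (c : ι → ℕ) (i : ι) :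
    ∑ x, (c + Pi.single i 1 : ι → ℕ) x • e x = ∑ x, c x • e x + e i := by
  simp [add_smul, Finset.sum_add_distrib, Pi.single_apply, ite_smul]

lemma sumsOfCard_succ (e : ι → σ →₀ ℕ) (t : ℕ) :
    sumsOfCard e (t + 1) = sumsOfCard e t + Set.range e := by
  ext b
  simp only [sumsOfCard, Set.mem_add, Set.mem_ofPred_eq, Set.mem_range]
  constructor
  · rintro ⟨c, hc, rfl⟩
    obtain ⟨i, hi⟩ : ∃ i, c i ≠ 0 := by
      by_contra! h
      simp [h] at hc
    have hc' : c - Pi.single i 1 + Pi.single i 1 = c := by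
      funext x
      rcases eq_or_ne x i with rfl | hx
      · simp; omega
      · simp [hx]
    refine ⟨_, ⟨c - Pi.single i 1, ?_, rfl⟩, e i, ⟨i, rfl⟩, ?_⟩
    · have := congrArg (fun f : ι → ℕ => ∑ x, f x) hc'
      simp only [Pi.add_apply, Finset.sum_add_distrib, Finset.sum_pi_single',
        Finset.mem_univ, if_true] at this
      omega
    · rw [← sum_add_single_smul, hc']
  · rintro ⟨_, ⟨c, hc, rfl⟩, _, ⟨i, rfl⟩, rfl⟩
    refine ⟨c + Pi.single i 1, ?_, (sum_add_single_smul e c i).symm⟩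
    simp [Finset.sum_add_distrib, hc]

lemma span_monomial_pow (e : ι → σ →₀ ℕ) (t : ℕ) :
    Ideal.span (Set.range fun i => monomial (e i) (1 : k)) ^ t
      = Ideal.span ((fun s => monomial s (1 : k)) '' sumsOfCard e t) := by
  induction t with
  | zero => simp [sumsOfCard_zero, Ideal.one_eq_top]
  | succ t ih =>
    have hmul : ∀ a b : σ →₀ ℕ, monomial (a + b) (1 : k) = monomial a 1 * monomial b 1 := by
      simp [monomial_mul]
    rw [pow_succ, ih, Ideal.span_mul_span', sumsOfCard_succ, ← Set.image2_add,
      Set.image_image2_distrib (g := fun s => monomial s (1 : k))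
        (g₁ := fun s => monomial s (1 : k)) (g₂ := fun s => monomial s (1 : k)) hmul,
      Set.image2_mul, ← Set.range_comp]
    rfl

lemma mem_of_mem_minGens_span_monomial {A : Set (σ →₀ ℕ)} {a : σ →₀ ℕ}
    (ha : a ∈ minGens k σ (Ideal.span ((fun s => monomial s (1 : k)) '' A))) : a ∈ A := by
  obtain ⟨ha_mem, ha_min⟩ := ha
  obtain ⟨b, hbA, hba⟩ : ∃ b ∈ A, b ≤ a :=
    mem_ideal_span_monomial_image.mp ha_mem a (by classical simp [mon])
  have hb_mem : mon k σ b ∈ Ideal.span ((fun s => monomial s (1 : k)) '' A) :=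
    Ideal.subset_span ⟨b, hbA, rfl⟩
  rwa [← ha_min b hb_mem hba]

end MonomialPowers

lemma eq_zero_of_forall_two_mul_le {ι : Type*} [Finite ι] {u : ι → ℕ} (f : ι → ι)
    (h : ∀ j, 2 * u j ≤ u (f j)) : u = 0 := by
  funext j
  have : Nonempty ι := ⟨j⟩
  obtain ⟨m, hm⟩ := Finite.exists_max u
  have hm_zero : u m = 0 := by
    have := h m
    have := hm (f m)
    omega
  exact Nat.le_zero.mp (hm_zero ▸ hm j)

section Cycle

variable {n}

lemma sum_smul_cycE_apply (w c : Fin n → ℕ) (j : Fin n) :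
    (∑ i, c i • cycE n w i) j = c (j + 1) + w j * c j := by
  simp only [cycE, Finsupp.finsetSum_apply, Finsupp.smul_apply, Finsupp.add_apply,
    Finsupp.single_apply, smul_eq_mul, mul_add, Finset.sum_add_distrib, sub_eq_iff_eq_add]
  simp [mul_comm]

lemma sum_smul_cycE_injective {w : Fin n → ℕ} (hw : ∀ i, 2 ≤ w i) :
    Function.Injective fun c : Fin n → ℕ => ∑ i, c i • cycE n w i := by
  intro c c' h
  have hdist : ∀ j, 2 * (c j).dist (c' j) ≤ (c (j + 1)).dist (c' (j + 1)) := by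
    intro j
    have hj := sum_smul_cycE_apply w c j
    rw [show (∑ i, c i • cycE n w i) = ∑ i, c' i • cycE n w i from h,
      sum_smul_cycE_apply] at hj
    calc 2 * (c j).dist (c' j) ≤ w j * (c j).dist (c' j) := Nat.mul_le_mul_right _ (hw j)
      _ = (w j * c j).dist (w j * c' j) := (Nat.dist_mul_left ..).symm
      _ = (c (j + 1)).dist (c' (j + 1)) := by simp only [Nat.dist]; omega
  funext j
  have := congrFun (eq_zero_of_forall_two_mul_le (· + 1) hdist) j
  simp only [Pi.zero_apply, Nat.dist] at this
  omega

end Cycle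

theorem unique_factorization_cycle_power_gens
    (w : Fin n → ℕ) (hw : ∀ i, 2 ≤ w i) (t : ℕ)
    (a : Fin n →₀ ℕ) (ha : a ∈ minGens k (Fin n) ((cycIdeal k n w) ^ t)) :
    ∃! c : Fin n → ℕ, (∑ i, c i = t) ∧ (a : Fin n →₀ ℕ) = ∑ i, c i • cycE n w i := by
  have hI : cycIdeal k n w = Ideal.span (Set.range fun i => monomial (cycE n w i) (1 : k)) := rfl
  rw [hI, span_monomial_pow] at ha
  obtain ⟨c, hc, rfl⟩ := mem_of_mem_minGens_span_monomial ha
  exact ⟨c, ⟨hc, rfl⟩, fun c' hc' => sum_smul_cycE_injective hw hc'.2.symm⟩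

end PaperReg
end
end

section
/- Let D = (V, E, w) be a vertex-weighted oriented graph with edge ideal I(D) = (x_i x_j^{w_j} : x_i → x_j ∈ E), and let z be a leaf of D with unique in-neighbor y (so the edge is y → z). Then for any integer t ≥ 2: (I(D)^t : y z^{w_z}) = I(D)^{t−1}. -/
/-! A monomial lies in `I(D)^t` iff its exponent dominates a sum of `t` edge exponents. If such a
sum is dominated by `ξ + μ`, where `μ` is the exponent of `y z^{w_z}`, one summand can be dropped
so that the remaining `t - 1` are dominated by `ξ`: drop `μ` if it occurs; otherwise, `z` being a
leaf, no summand involves `z`, and a summand with the largest `y`-exponent absorbs the `y` of `μ`. -/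

open MvPolynomial

noncomputable section

namespace PaperReg

variable (k : Type) [Field k] (σ : Type)

variable (V : Type) [Fintype V] [DecidableEq V]

/-- The edge-ideal generator attached to a directed edge `e` of a vertex-weighted
oriented graph: `x_{e.1} * x_{e.2} ^ (w e.2)`. -/
def edgeMon (w : V → ℕ) (e : V × V) : MvPolynomial V k :=
  monomial (Finsupp.single e.1 1 + Finsupp.single e.2 (w e.2)) 1

/-- The edge ideal of a vertex-weighted oriented graph with edge set `E`. -/
def edgeIdeal (E : Finset (V × V)) (w : V → ℕ) : Ideal (MvPolynomial V k) :=
  Ideal.span (edgeMon k V w '' ↑E)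

/-- The underlying undirected simple graph of the directed edge set `E`. -/
def underlying (E : Finset (V × V)) : SimpleGraph V where
  Adj a b := a ≠ b ∧ ((a, b) ∈ E ∨ (b, a) ∈ E)
  symm := ⟨fun a b h => ⟨h.1.symm, h.2.symm⟩⟩
  loopless := ⟨fun a h => h.1 rfl⟩

/-- The degree of a vertex in the underlying graph. -/
def degOf (E : Finset (V × V)) (v : V) : ℕ :=
  (E.filter (fun e => e.1 = v ∨ e.2 = v)).card

section MonomialIdeal

variable {R ι : Type*} [CommSemiring R]

open scoped Pointwise in
theorem mem_span_monomial_pow_iff {A : Set (ι →₀ ℕ)} {n : ℕ} {f : MvPolynomial ι R} :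
    f ∈ Ideal.span ((fun a => monomial a (1 : R)) '' A) ^ n ↔
      ∀ ξ ∈ f.support, ∃ g : Fin n → ι →₀ ℕ, (∀ i, g i ∈ A) ∧ ∑ i, g i ≤ ξ := by
  have hA : (fun a => monomial a (1 : R)) '' A =
      monomialOneHom R ι '' (Multiplicative.ofAdd '' A) := by
    rw [Set.image_image]; rfl
  have hpow : Ideal.span ((fun a => monomial a (1 : R)) '' A) ^ n =
      Ideal.span ((fun a => monomial a (1 : R)) ''
        (Multiplicative.toAdd '' (Multiplicative.ofAdd '' A) ^ n)) := by
    rw [Ideal.span, Submodule.span_pow, hA, ← Set.image_pow, Set.image_image, Ideal.span]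
    rfl
  rw [hpow, mem_ideal_span_monomial_image]
  refine forall₂_congr fun ξ _ => ?_
  simp only [Set.mem_pow_iff_prod, Set.mem_image]
  constructor
  · rintro ⟨_, ⟨_, ⟨g, hg, rfl⟩, rfl⟩, hle⟩
    refine ⟨fun i => (g i).toAdd, fun i => ?_, by rwa [← toAdd_prod]⟩
    obtain ⟨a, ha, hag⟩ := hg i
    simpa [← hag] using ha
  · rintro ⟨g, hg, hle⟩
    exact ⟨_, ⟨_, ⟨fun i => Multiplicative.ofAdd (g i), fun i => ⟨g i, hg i, rfl⟩, rfl⟩, rfl⟩,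
      by rwa [toAdd_prod]⟩

theorem add_mem_support_mul_monomial {f : MvPolynomial ι R} {ξ : ι →₀ ℕ} (hξ : ξ ∈ f.support)
    (μ : ι →₀ ℕ) : ξ + μ ∈ (f * monomial μ 1).support := by
  rwa [mem_support_iff, coeff_mul_monomial, mul_one, ← mem_support_iff]

end MonomialIdeal

theorem le_of_add_le_add_of_inf_le {ι : Type*} {b c ξ μ : ι →₀ ℕ} (h : c + b ≤ ξ + μ)
    (hc : μ ⊓ (c + b) ≤ c) : b ≤ ξ := fun v => by
  have h := h v
  have hc := hc v
  simp only [Finsupp.add_apply, Finsupp.inf_apply] at h hc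
  omega

section LeafEdge

variable {ι : Type*} (w : ι → ℕ)

def edgeExp (e : ι × ι) : ι →₀ ℕ :=
  Finsupp.single e.1 1 + Finsupp.single e.2 (w e.2)

theorem edgeExp_apply_of_ne {e : ι × ι} {v : ι} (h₁ : e.1 ≠ v) (h₂ : e.2 ≠ v) :
    edgeExp w e v = 0 := by
  simp [edgeExp, h₁, h₂]

variable {E : Set (ι × ι)} {y z : ι} (hleaf : ∀ e ∈ E, e.1 = z ∨ e.2 = z → e = (y, z))
include hleaf

theorem exists_inf_sum_le_of_leaf {n : ℕ} (g : Fin (n + 1) → ι →₀ ℕ)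
    (hg : ∀ i, g i ∈ edgeExp w '' E) : ∃ i, edgeExp w (y, z) ⊓ ∑ j, g j ≤ g i := by
  by_cases hμ : ∃ i, g i = edgeExp w (y, z)
  · obtain ⟨i, hi⟩ := hμ
    exact ⟨i, hi ▸ inf_le_left⟩
  simp only [not_exists] at hμ
  have hz : ∀ i, g i z = 0 := by
    intro i
    obtain ⟨e, he, hge⟩ := hg i
    rw [← hge]
    by_contra hez
    refine hμ i (hge.symm.trans (congrArg _ (hleaf e he ?_)))
    by_contra! hne
    exact hez (edgeExp_apply_of_ne w hne.1 hne.2)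
  obtain ⟨i, hi⟩ := Finite.exists_max fun i => g i y
  refine ⟨i, fun v => ?_⟩
  simp only [Finsupp.inf_apply, Finsupp.finsetSum_apply]
  by_cases hvz : v = z
  · simp [hvz, hz]
  by_cases hvy : v = y
  · subst hvy
    rcases Nat.eq_zero_or_pos (g i v) with hiv | hiv
    · have : ∑ j, g j v = 0 := Finset.sum_eq_zero fun j _ => by have := hi j; omega
      simp [this]
    · have : edgeExp w (v, z) v = 1 := by simp [edgeExp, (Ne.symm hvz : z ≠ v)]
      rw [this]
      exact inf_le_left.trans hiv
  · have : edgeExp w (y, z) v = 0 := edgeExp_apply_of_ne w (Ne.symm hvy) (Ne.symm hvz)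
    simp [this]

theorem exists_sum_le_of_sum_le_add_of_leaf {n : ℕ} (g : Fin (n + 1) → ι →₀ ℕ)
    (hg : ∀ i, g i ∈ edgeExp w '' E) {ξ : ι →₀ ℕ} (hle : ∑ i, g i ≤ ξ + edgeExp w (y, z)) :
    ∃ g' : Fin n → ι →₀ ℕ, (∀ i, g' i ∈ edgeExp w '' E) ∧ ∑ i, g' i ≤ ξ := by
  obtain ⟨i, hi⟩ := exists_inf_sum_le_of_leaf w hleaf g hg
  have hsum := Fin.sum_univ_succAbove g i
  refine ⟨g ∘ i.succAbove, fun j => hg _, ?_⟩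
  rw [hsum] at hle hi
  exact le_of_add_le_add_of_inf_le hle hi

end LeafEdge

omit [Fintype V] [DecidableEq V] in
theorem edgeIdeal_eq_span (E : Finset (V × V)) (w : V → ℕ) :
    edgeIdeal k V E w = Ideal.span ((fun a => monomial a (1 : k)) '' (edgeExp w '' E)) := by
  rw [edgeIdeal, Set.image_image]
  rfl

theorem colon_power_leaf
    (E : Finset (V × V)) (w : V → ℕ)
    (y z : V) (hyz : (y, z) ∈ E)
    (hleaf : ∀ e ∈ E, e.1 = z ∨ e.2 = z → e = (y, z))
    (t : ℕ) (ht : 2 ≤ t) :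
    Submodule.colon ((edgeIdeal k V E w) ^ t)
        (Ideal.span {mon k V (Finsupp.single y 1 + Finsupp.single z (w z))}) =
      (edgeIdeal k V E w) ^ (t - 1) := by
  obtain ⟨s, rfl⟩ : ∃ s, t = s + 1 := ⟨t - 1, by omega⟩
  rw [Nat.add_sub_cancel]
  apply le_antisymm
  · intro f hf
    rw [Ideal.mem_colon_span_singleton] at hf
    rw [edgeIdeal_eq_span, mem_span_monomial_pow_iff] at hf ⊢
    intro ξ hξ
    obtain ⟨g, hg, hle⟩ := hf _ (add_mem_support_mul_monomial hξ (edgeExp w (y, z)))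
    exact exists_sum_le_of_sum_le_add_of_leaf w hleaf g hg hle
  · intro f hf
    rw [Ideal.mem_colon_span_singleton, pow_succ]
    exact Ideal.mul_mem_mul hf (Ideal.subset_span ⟨(y, z), hyz, rfl⟩)

end PaperReg
end
end

section
/- Let D = (V, E, w) be a vertex-weighted oriented graph and let z be a leaf of D with unique in-neighbor y. Then for any t ≥ 1: (I(D)^t, z^{w_z}) = (I(D∖z)^t, z^{w_z}), where D∖z is the induced subgraph on V∖{z}. -/
/-!
Every edge at the leaf `z` points into `z`, so its generator is divisible by `x_z^{w_z}`.
Hence `I(D∖z) ⊆ I(D) ⊆ I(D∖z) + (x_z^{w_z})`, and since `(J + M)^t ⊆ J^t + M` for any ideals,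
adding `M = (x_z^{w_z})` to the `t`-th powers erases the difference.
-/

open MvPolynomial

noncomputable section

namespace PaperReg

variable (k : Type) [Field k] (σ : Type)

variable (V : Type) [Fintype V] [DecidableEq V]

theorem _root_.Ideal.sup_pow_le_pow_sup {R : Type*} [CommSemiring R] (I J : Ideal R) (t : ℕ) :
    (I ⊔ J) ^ t ≤ I ^ t ⊔ J := by
  induction t with
  | zero => simp
  | succ t ih =>
    rw [pow_succ, pow_succ]
    calc (I ⊔ J) ^ t * (I ⊔ J) ≤ (I ^ t ⊔ J) * (I ⊔ J) := Ideal.mul_mono_left ih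
      _ ≤ I ^ t * I ⊔ J := by
        rw [Ideal.sup_mul]
        refine sup_le ?_ (Ideal.mul_le_left.trans le_sup_right)
        rw [Ideal.mul_sup]
        exact sup_le_sup_left Ideal.mul_le_right _

theorem _root_.Ideal.pow_sup_eq_pow_sup_of_le_of_le_sup {R : Type*} [CommSemiring R]
    {I I' J : Ideal R} (hI' : I' ≤ I) (hI : I ≤ I' ⊔ J) (t : ℕ) :
    I ^ t ⊔ J = I' ^ t ⊔ J :=
  le_antisymm
    (sup_le ((Ideal.pow_right_mono hI t).trans (Ideal.sup_pow_le_pow_sup I' J t)) le_sup_right)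
    (sup_le_sup_right (Ideal.pow_right_mono hI' t) J)

theorem edgeIdeal_mono {k V : Type} [Field k] {E E' : Finset (V × V)} (h : E' ⊆ E) (w : V → ℕ) :
    edgeIdeal k V E' w ≤ edgeIdeal k V E w :=
  Ideal.span_mono (Set.image_mono (Finset.coe_subset.mpr h))

theorem edgeMon_mem_span_mon_single {k V : Type} [Field k] (w : V → ℕ) (e : V × V) :
    edgeMon k V w e ∈ Ideal.span {mon k V (Finsupp.single e.2 (w e.2))} :=
  Ideal.mem_span_singleton'.mpr ⟨mon k V (Finsupp.single e.1 1), by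
    rw [mon, mon, edgeMon, monomial_mul, one_mul]⟩

theorem edgeIdeal_le_deleteVertex_sup {k V : Type} [Field k] [DecidableEq V]
    {E : Finset (V × V)} (w : V → ℕ) {z : V}
    (hz : ∀ e ∈ E, e.1 = z → e.2 = z) :
    edgeIdeal k V E w ≤ edgeIdeal k V (E.filter (fun e => e.1 ≠ z ∧ e.2 ≠ z)) w ⊔
      Ideal.span {mon k V (Finsupp.single z (w z))} := by
  rw [edgeIdeal, Ideal.span_le]
  rintro _ ⟨e, he, rfl⟩
  by_cases hez : e.2 = z
  · exact Ideal.mem_sup_right (hez ▸ edgeMon_mem_span_mon_single w e)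
  · refine Ideal.mem_sup_left (Ideal.subset_span ⟨e, ?_, rfl⟩)
    exact Finset.mem_filter.mpr ⟨he, fun h => hez (hz e he h), hez⟩

theorem power_add_leaf_pow
    (E : Finset (V × V)) (w : V → ℕ)
    (y z : V)
    (hleaf : ∀ e ∈ E, e.1 = z ∨ e.2 = z → e = (y, z))
    (t : ℕ) :
    (edgeIdeal k V E w) ^ t ⊔ Ideal.span {mon k V (Finsupp.single z (w z))} =
      (edgeIdeal k V (E.filter (fun e => e.1 ≠ z ∧ e.2 ≠ z)) w) ^ t ⊔
        Ideal.span {mon k V (Finsupp.single z (w z))} := by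
  have hz : ∀ e ∈ E, e.1 = z → e.2 = z := fun e he h => by rw [hleaf e he (Or.inl h)]
  exact Ideal.pow_sup_eq_pow_sup_of_le_of_le_sup (edgeIdeal_mono (Finset.filter_subset _ E) w)
    (edgeIdeal_le_deleteVertex_sup w hz) t

end PaperReg
end
end

section
/- Let C_n (n ≥ 3) be the oriented n-cycle with all vertex weights ≥ 2, L_i = x_{i−1} x_i^{w_i}, and fix t ≥ 1. Order the minimal generators of I(C_n)^t lexicographically by exponent vectors (a_1,...,a_n) of their expressions L_1^{a_1}···L_n^{a_n}. For a generator L_i^{(t)} = L_{i_1}^{a_{i_1}}···L_{i_k}^{a_{i_k}} (i_1 < ··· < i_k) with i_1 ≥ 2, and J_i the ideal generated by all generators strictly smaller than L_i^{(t)}, one has (J_i : L_i^{(t)}) = ((L_{i_1+1},...,L_n) : L_{i_1}) + Σ_{j=1}^{p}(L_{i_j+1} : L_{i_j}), where p = k−1 if i_k = n and p = k otherwise. -/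
open MvPolynomial

noncomputable section

namespace PaperReg

variable (k : Type) [Field k] (σ : Type)

variable (n : ℕ) [NeZero n]

/-- The generator of `I(C_n)^t` with factorization exponent vector `a`:
`∏_i L_i ^ (a i)`. -/
def cycGen (w : Fin n → ℕ) (a : Fin n → ℕ) : MvPolynomial (Fin n) k :=
  monomial (∑ i, a i • cycE n w i) (1 : k)

/-- Lexicographic comparison of exponent vectors: `a <_lex b`. -/
def lexLt (a b : Fin n → ℕ) : Prop :=
  ∃ j : Fin n, (∀ l, l < j → a l = b l) ∧ a j < b j

/-- The ideal generated by all minimal generators of `I(C_n)^t` that are strictly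
smaller than the generator with exponent vector `a` in the lexicographic order. -/
def lowerIdeal (w : Fin n → ℕ) (t : ℕ) (a : Fin n → ℕ) :
    Ideal (MvPolynomial (Fin n) k) :=
  Ideal.span { p | ∃ b : Fin n → ℕ, (∑ i, b i = t) ∧ lexLt n b a ∧ p = cycGen k n w b }
section Aux
set_option linter.unusedSectionVars false

variable {k n}

lemma sumE_apply (w : Fin n → ℕ) (a : Fin n → ℕ) (l : Fin n) :
    (∑ i, a i • cycE n w i) l = a (l + 1) + w l * a l := by
  classical
  rw [Finsupp.finset_sum_apply]
  have h : ∀ i : Fin n, (a i • cycE n w i) l =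
      (if l + 1 = i then a i else 0) + (if l = i then a i * w i else 0) := by
    intro i
    rw [cycE, Finsupp.smul_apply, Finsupp.add_apply, smul_eq_mul, mul_add]
    congr 1
    · rw [Finsupp.single_apply]
      by_cases hi : l + 1 = i
      · rw [if_pos hi, if_pos (by rw [← hi]; exact add_sub_cancel_right l 1), mul_one]
      · rw [if_neg hi, if_neg (fun hc => hi (by rw [← hc, sub_add_cancel])), mul_zero]
    · rw [Finsupp.single_apply]
      by_cases hi : l = i
      · rw [if_pos hi.symm, if_pos hi]
      · rw [if_neg (fun hc => hi hc.symm), if_neg hi, mul_zero]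
  rw [Finset.sum_congr rfl (fun i _ => h i), Finset.sum_add_distrib,
    Finset.sum_ite_eq, Finset.sum_ite_eq]
  simp [mul_comm]

lemma sum_update_add (c : Fin n → ℕ) (j : Fin n) :
    ∑ i, Function.update c j (c j + 1) i = (∑ i, c i) + 1 := by
  classical
  rw [← Finset.add_sum_erase _ _ (Finset.mem_univ j),
      ← Finset.add_sum_erase _ (fun i => c i) (Finset.mem_univ j),
      Finset.sum_congr rfl (fun i hi => Function.update_of_ne (Finset.ne_of_mem_erase hi) _ _),
      Function.update_self]
  ring

lemma sumE_update_add (w : Fin n → ℕ) (c : Fin n → ℕ) (j : Fin n) :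
    ∑ i, Function.update c j (c j + 1) i • cycE n w i
      = cycE n w j + ∑ i, c i • cycE n w i := by
  classical
  rw [← Finset.add_sum_erase _ _ (Finset.mem_univ j),
      ← Finset.add_sum_erase _ (fun i => c i • cycE n w i) (Finset.mem_univ j),
      Finset.sum_congr rfl
        (fun i hi => by rw [Function.update_of_ne (Finset.ne_of_mem_erase hi)]),
      Function.update_self, add_smul, one_smul]
  abel

lemma cycGen_update (w : Fin n → ℕ) (c : Fin n → ℕ) (j : Fin n) :
    cycGen k n w (Function.update c j (c j + 1)) = cycL k n w j * cycGen k n w c := by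
  rw [cycGen, cycGen, cycL, monomial_mul, mul_one, sumE_update_add]

lemma update_pred (a : Fin n → ℕ) (j : Fin n) (h : a j ≠ 0) :
    Function.update (Function.update a j (a j - 1)) j
      ((Function.update a j (a j - 1)) j + 1) = a := by
  rw [Function.update_self, Function.update_idem]
  have h2 : a j - 1 + 1 = a j := Nat.succ_pred_eq_of_pos (Nat.pos_of_ne_zero h)
  rw [h2, Function.update_eq_self]

lemma cycGen_factor (w : Fin n → ℕ) (a : Fin n → ℕ) (j : Fin n) (h : a j ≠ 0) :
    cycGen k n w a = cycL k n w j * cycGen k n w (Function.update a j (a j - 1)) := by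
  conv_lhs => rw [← update_pred a j h]
  exact cycGen_update w _ j

lemma move_mem (w : Fin n → ℕ) (t : ℕ) (a : Fin n → ℕ) (hsum : ∑ i, a i = t)
    (j j' : Fin n) (hjj' : j < j') (hj : a j ≠ 0) :
    cycL k n w j' * cycGen k n w (Function.update a j (a j - 1))
      ∈ lowerIdeal k n w t a := by
  rw [← cycGen_update]
  apply Ideal.subset_span
  refine ⟨_, ?_, ⟨j, fun l hl => ?_, ?_⟩, rfl⟩
  · rw [sum_update_add]
    conv_rhs => rw [← hsum, ← update_pred a j hj, sum_update_add]
  · rw [Function.update_of_ne (ne_of_lt (hl.trans hjj')),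
      Function.update_of_ne (ne_of_lt hl)]
  · rw [Function.update_of_ne (ne_of_lt hjj'), Function.update_self]
    omega


end Aux

/-- for a generator `L_i^{(t)}` of `I(C_n)^t` with factorization
`L_{i_1}^{a_{i_1}}···L_{i_k}^{a_{i_k}}` and `i_1 ≥ 2` (here: smallest cycle index
`i₁ ≠ 0` in the `0`-indexed labelling `L_i = x_{i-1} x_i^{w_i}`), the colon ideal of
the ideal of lexicographically smaller generators by `L_i^{(t)}` equals
`((L_{i_1+1},…,L_n) : L_{i_1}) + Σ_{j=1}^{p} (L_{i_j+1} : L_{i_j})`, where the last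
support index is omitted from the sum exactly when it equals `n`. -/
theorem colon_lowerIdeal_eq
    (hn : 3 ≤ n) (w : Fin n → ℕ) (hw : ∀ i, 2 ≤ w i) (t : ℕ) (ht : 1 ≤ t)
    (a : Fin n → ℕ) (hsum : ∑ i, a i = t)
    (i₁ : Fin n) (hi₁ : a i₁ ≠ 0) (hmin : ∀ j, a j ≠ 0 → i₁ ≤ j) (hi₁0 : i₁ ≠ 0) :
    Submodule.colon (lowerIdeal k n w t a) (Ideal.span {cycGen k n w a}) =
      Submodule.colon (Ideal.span { p | ∃ j : Fin n, i₁ < j ∧ p = cycL k n w j })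
          (Ideal.span {cycL k n w i₁}) ⊔
        ⨆ j ∈ Finset.univ.filter (fun j : Fin n => a j ≠ 0 ∧ (j : ℕ) ≠ n - 1),
          Submodule.colon (Ideal.span {cycL k n w (j + 1)})
            (Ideal.span {cycL k n w j}) := by
  classical
  obtain ⟨m, rfl⟩ : ∃ m, n = m + 1 := ⟨n - 1, by omega⟩
  apply le_antisymm
  · -- hard direction
    intro r hr
    rw [Ideal.mem_colon_span_singleton] at hr
    have hJeq : { p | ∃ b : Fin (m+1) → ℕ, (∑ i, b i = t) ∧ lexLt (m+1) b a
          ∧ p = cycGen k (m+1) w b }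
        = (fun s => monomial s (1:k)) ''
          { e | ∃ b : Fin (m+1) → ℕ, (∑ i, b i = t) ∧ lexLt (m+1) b a
              ∧ e = ∑ i, b i • cycE (m+1) w i } := by
      ext p
      constructor
      · rintro ⟨b, h1, h2, rfl⟩; exact ⟨_, ⟨b, h1, h2, rfl⟩, rfl⟩
      · rintro ⟨e, ⟨b, h1, h2, rfl⟩, rfl⟩; exact ⟨b, h1, h2, rfl⟩
    rw [lowerIdeal, hJeq, mem_ideal_span_monomial_image] at hr
    have hUle : Ideal.span ((fun s => monomial s (1:k)) ''
        { e | (∃ j : Fin (m+1), a j ≠ 0 ∧ (j:ℕ) ≠ m + 1 - 1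
                ∧ e = Finsupp.single (j+1) (w (j+1)))
            ∨ ∃ j : Fin (m+1), i₁ < j ∧ e = cycE (m+1) w j })
        ≤ Submodule.colon
            (Ideal.span { p | ∃ j : Fin (m+1), i₁ < j ∧ p = cycL k (m+1) w j })
            (Ideal.span {cycL k (m+1) w i₁}) ⊔
          ⨆ j ∈ Finset.univ.filter (fun j : Fin (m+1) => a j ≠ 0 ∧ (j : ℕ) ≠ m + 1 - 1),
            Submodule.colon (Ideal.span {cycL k (m+1) w (j + 1)})
              (Ideal.span {cycL k (m+1) w j}) := by
      rw [Ideal.span_le]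
      rintro _ ⟨e, he, rfl⟩
      rw [SetLike.mem_coe]
      rcases he with ⟨j, hja, hjn, rfl⟩ | ⟨j, hj, rfl⟩
      · apply Submodule.mem_sup_right
        apply Submodule.mem_iSup_of_mem j
        apply Submodule.mem_iSup_of_mem (Finset.mem_filter.mpr ⟨Finset.mem_univ _, hja, hjn⟩)
        rw [Ideal.mem_colon_span_singleton, Ideal.mem_span_singleton]
        refine ⟨monomial (Finsupp.single (j-1) 1 + Finsupp.single j (w j - 1)) 1, ?_⟩
        show monomial (Finsupp.single (j+1) (w (j+1))) (1:k) * cycL k (m+1) w j = _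
        rw [cycL, cycL, monomial_mul, monomial_mul, mul_one, cycE, cycE]
        have hexp : Finsupp.single (j+1) (w (j+1))
              + (Finsupp.single (j-1) 1 + Finsupp.single j (w j))
            = (Finsupp.single (j+1-1) 1 + Finsupp.single (j+1) (w (j+1)))
              + (Finsupp.single (j-1) 1 + Finsupp.single j (w j - 1)) := by
          rw [add_sub_cancel_right]
          have hwj : w j = 1 + (w j - 1) := by have := hw j; omega
          conv_lhs => rw [hwj]
          rw [Finsupp.single_add]
          abel
        rw [hexp]
      · apply Submodule.mem_sup_left
        rw [Ideal.mem_colon_span_singleton]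
        exact Ideal.mul_mem_right _ _ (Ideal.subset_span ⟨j, hj, rfl⟩)
    apply hUle
    rw [mem_ideal_span_monomial_image]
    intro μ hμ
    have hμ' : μ + (∑ i, a i • cycE (m+1) w i) ∈ (r * cycGen k (m+1) w a).support := by
      rw [MvPolynomial.mem_support_iff, cycGen, MvPolynomial.coeff_mul_monomial, mul_one]
      exact MvPolynomial.mem_support_iff.mp hμ
    obtain ⟨e, ⟨b, hbsum, hblex, rfl⟩, hle⟩ := hr _ hμ'
    obtain ⟨s, hs1, hs2⟩ := hblex
    set d : Fin (m+1) → ℤ := fun l => (b l : ℤ) - a l with hd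
    have hkeyd : ∀ l : Fin (m+1), d (l+1) + (w l : ℤ) * d l ≤ (μ l : ℤ) := by
      intro l
      have h1 := (Finsupp.le_def.mp hle) l
      rw [sumE_apply, Finsupp.add_apply, sumE_apply] at h1
      have h1' : (b (l+1) : ℤ) + w l * b l ≤ μ l + (a (l+1) + w l * a l) := by
        exact_mod_cast h1
      simp only [hd]
      nlinarith [h1']
    have hi₁s : i₁ ≤ s := hmin s (by omega)
    have hspos : s ≠ 0 := fun h => hi₁0 (Fin.le_zero_iff.mp (h ▸ hi₁s))
    have hdlt : ∀ l, l < s → d l = 0 := fun l hl => by simp [hd, hs1 l hl]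
    have hd0 : d 0 = 0 := hdlt 0 ((Fin.pos_iff_ne_zero' s).mpr hspos)
    have hds : d s ≤ -1 := by simp only [hd]; omega
    have hdsum : ∑ l, d l = 0 := by
      simp only [hd, Finset.sum_sub_distrib]
      rw [← Nat.cast_sum, ← Nat.cast_sum, hbsum, hsum, sub_self]
    have hex : ∃ p : Fin (m+1), 1 ≤ d p ∧ (w p : ℤ) ≤ (w p : ℤ) * d p + d (p+1) := by
      by_contra hcon
      push_neg at hcon
      have hstep : ∀ p : Fin (m+1), 1 ≤ d p → d (p+1) ≤ -d p := by
        intro p hp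
        have h2 : (2:ℤ) ≤ (w p : ℤ) := by exact_mod_cast hw p
        have h3 := hcon p hp
        nlinarith
      set P := Finset.univ.filter (fun p : Fin (m+1) => 1 ≤ d p) with hP
      set N := Finset.univ.filter (fun l : Fin (m+1) => d l ≤ -1) with hN
      have hsub : Finset.image (fun p => p + 1) P ⊆ N := by
        intro x hx
        obtain ⟨p, hp, rfl⟩ := Finset.mem_image.mp hx
        have hp1 := (Finset.mem_filter.mp hp).2
        exact Finset.mem_filter.mpr ⟨Finset.mem_univ _, by linarith [hstep p hp1]⟩
      have hsN : s ∈ N := Finset.mem_filter.mpr ⟨Finset.mem_univ _, hds⟩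
      have hsnot : s ∉ Finset.image (fun p => p + 1) P := by
        intro hx
        obtain ⟨p, hp, hps⟩ := Finset.mem_image.mp hx
        have hp1 := (Finset.mem_filter.mp hp).2
        have hpe : p = s - 1 := by rw [← hps, add_sub_cancel_right]
        have hlt : s - 1 < s := by
          rw [Fin.lt_def, Fin.coe_sub_one, if_neg hspos]
          have : (s:ℕ) ≠ 0 := fun h => hspos (Fin.ext h)
          omega
        have hz := hdlt (s-1) hlt
        rw [hpe, hz] at hp1
        omega
      have htot : ∑ p ∈ P, d p = ∑ l ∈ N, (-d l) := by
        have h1 : ∑ l ∈ P, d l + ∑ l ∈ Finset.univ.filter (fun l => ¬ 1 ≤ d l), d l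
            = ∑ l : Fin (m+1), d l := Finset.sum_filter_add_sum_filter_not _ _ _
        have h2 : ∑ l ∈ N, d l = ∑ l ∈ Finset.univ.filter (fun l => ¬ 1 ≤ d l), d l := by
          refine Finset.sum_subset ?_ ?_
          · intro x hx
            have := (Finset.mem_filter.mp hx).2
            exact Finset.mem_filter.mpr ⟨Finset.mem_univ _, by omega⟩
          · intro x hx hnx
            have h3 := (Finset.mem_filter.mp hx).2
            have h4 : ¬ d x ≤ -1 := fun hc => hnx (Finset.mem_filter.mpr ⟨Finset.mem_univ _, hc⟩)
            omega
        rw [hdsum] at h1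
        rw [Finset.sum_neg_distrib]
        linarith [h1, h2]
      have h6 : ∑ l ∈ insert s (Finset.image (fun p => p+1) P), (-d l)
          ≤ ∑ l ∈ N, (-d l) :=
        Finset.sum_le_sum_of_subset_of_nonneg (Finset.insert_subset hsN hsub)
          (fun x hx _ => by
            have := (Finset.mem_filter.mp hx).2
            omega)
      rw [Finset.sum_insert hsnot] at h6
      have h7 : ∑ l ∈ Finset.image (fun p => p+1) P, (-d l) = ∑ p ∈ P, (-d (p+1)) :=
        Finset.sum_image (fun x _ y _ h => add_right_cancel h)
      have h8 : ∑ p ∈ P, d p ≤ ∑ p ∈ P, (-d (p+1)) :=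
        Finset.sum_le_sum (fun p hp => by
          have := hstep p (Finset.mem_filter.mp hp).2
          omega)
      have h9 : (1:ℤ) ≤ -d s := by omega
      rw [h7] at h6
      linarith [htot, h6, h8, h9]
    obtain ⟨p, hp1, hp2⟩ := hex
    have hμp : w p ≤ μ p := by
      have h1 := hkeyd p
      have h2 : (w p : ℤ) ≤ (μ p : ℤ) := by linarith [hp2]
      exact_mod_cast h2
    have hp0 : p ≠ 0 := fun h => by rw [h, hd0] at hp1; omega
    have hpv0 : (p:ℕ) ≠ 0 := fun h => hp0 (Fin.ext h)
    have hsp : s < p := by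
      rcases lt_trichotomy p s with h | h | h
      · have := hdlt p h; omega
      · rw [h] at hp1; omega
      · exact h
    by_cases hc : d (p - 1) < 0
    · refine ⟨Finsupp.single p (w p), Or.inl ⟨p - 1, ?_, ?_, ?_⟩, ?_⟩
      · simp only [hd] at hc; omega
      · rw [Fin.coe_sub_one, if_neg hp0]
        have := p.isLt
        omega
      · rw [sub_add_cancel]
      · exact Finsupp.single_le_iff.mpr hμp
    · push_neg at hc
      have hi₁p : i₁ < p := lt_of_le_of_lt hi₁s hsp
      have hμpm : 1 ≤ μ (p - 1) := by
        have h1 := hkeyd (p - 1)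
        rw [sub_add_cancel] at h1
        have h2 : (0:ℤ) ≤ (w (p-1) : ℤ) * d (p-1) := mul_nonneg (by positivity) hc
        have h3 : (1:ℤ) ≤ (μ (p-1) : ℤ) := by linarith [hp1]
        exact_mod_cast h3
      refine ⟨cycE (m+1) w p, Or.inr ⟨p, hi₁p, rfl⟩, ?_⟩
      rw [Finsupp.le_def]
      intro l
      rw [cycE, Finsupp.add_apply, Finsupp.single_apply, Finsupp.single_apply]
      have hne : p - 1 ≠ p := by
        intro h
        have h' := congrArg Fin.val h
        rw [Fin.coe_sub_one, if_neg hp0] at h'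
        omega
      by_cases h1 : p - 1 = l
      · rw [if_pos h1, if_neg (fun h => hne (h1.trans h.symm)), ← h1]
        omega
      · rw [if_neg h1]
        by_cases h2 : p = l
        · rw [if_pos h2, ← h2]; omega
        · rw [if_neg h2]; omega
  · -- easy direction
    apply sup_le
    · intro r hr
      rw [Ideal.mem_colon_span_singleton] at hr ⊢
      rw [cycGen_factor w a i₁ hi₁, ← mul_assoc]
      have hS : Ideal.span { p | ∃ j : Fin (m+1), i₁ < j ∧ p = cycL k (m+1) w j }
          ≤ Submodule.colon (lowerIdeal k (m+1) w t a)
            (Ideal.span {cycGen k (m+1) w (Function.update a i₁ (a i₁ - 1))}) := by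
        rw [Ideal.span_le]
        rintro _ ⟨j, hj, rfl⟩
        rw [SetLike.mem_coe, Ideal.mem_colon_span_singleton]
        exact move_mem w t a hsum i₁ j hj hi₁
      have h2 := hS hr
      rw [Ideal.mem_colon_span_singleton] at h2
      exact h2
    · refine iSup_le fun j => iSup_le fun hjmem => ?_
      obtain ⟨hja, hjn⟩ := (Finset.mem_filter.mp hjmem).2
      intro r hr
      rw [Ideal.mem_colon_span_singleton] at hr ⊢
      obtain ⟨c, hc⟩ := Ideal.mem_span_singleton.mp hr
      have hjlt : j < j + 1 := by
        rw [Fin.lt_def, Fin.val_add_one,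
          if_neg (fun h => hjn (by rw [h]; simp [Fin.last]))]
        omega
      rw [cycGen_factor w a j hja, ← mul_assoc, hc, mul_assoc, mul_comm c, ← mul_assoc]
      exact Ideal.mul_mem_right _ _ (move_mem w t a hsum j (j+1) hjlt hja)


end PaperReg
end
end
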